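/- Let m ∈ ℕ and let p be a prime, with A = {1,…,p−1}. Then there exists R ∈ ℕ such that for every integer r ≥ R, D_{A,m}(C_p^r) ≥ (log p) · m / log(1 + m(p−1)) · r, where log denotes the natural logarithm. -/

import Mathlib

/-!
Suppose every sequence of length `n` over `V = 𝔽_p^r` has `m` disjoint weighted zero-subsums.
Recording for each position which subsum uses it, and with which nonzero weight, gives a weight
matrix with at most one nonzero entry per row and a nonzero entry in every column; there are at
most `(1 + m(p-1))^n` such matrices. For a fixed matrix `C` the map `g ↦ (∑ i, C i j • g i)_j`
from `V^n` onto `V^m` is surjective, so its kernel has `|V|^n / |V|^m` elements. Covering `V^n`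
by these kernels gives `p^(rm) ≤ (1 + m(p-1))^n`. Apply this with `n = D_{A,m}(C_p^r)`, which is
finite since any `p^r + 2m + 1` vectors contain `m` disjoint repeated pairs `x, x` (weighted by `1`
and `p - 1`), and take logarithms; the bound holds for every `r`.
-/

open scoped BigOperators

/-- `l` encodes a `W`-weighted zero-subsum of the sequence (multiset) `S`:
a nonempty list of (weight, group element) pairs with weights in `W`, whose
group elements form a sub-multiset of `S` and whose weighted sum is zero. -/
def IsWZeroSubsum {G : Type*} [AddCommGroup G] (W : Set ℤ) (S : Multiset G)
    (l : List (ℤ × G)) : Prop :=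
  l ≠ [] ∧ (∀ p ∈ l, p.1 ∈ W) ∧ (↑(l.map Prod.snd) : Multiset G) ≤ S ∧
    (l.map fun p => p.1 • p.2).sum = 0

/-- `S` has a `W`-weighted zero-subsum whose length lies in `L`. -/
def HasWZeroSubsumLen {G : Type*} [AddCommGroup G] (W : Set ℤ) (S : Multiset G)
    (L : Set ℕ) : Prop :=
  ∃ l : List (ℤ × G), IsWZeroSubsum W S l ∧ l.length ∈ L

/-- `S` has `m` pairwise disjoint `W`-weighted zero-subsums. -/
def HasDisjointWZeroSubsums {G : Type*} [AddCommGroup G] (W : Set ℤ) (S : Multiset G)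
    (m : ℕ) : Prop :=
  ∃ ls : List (List (ℤ × G)), ls.length = m ∧
    (∀ l ∈ ls, l ≠ [] ∧ (∀ p ∈ l, p.1 ∈ W) ∧ (l.map fun p => p.1 • p.2).sum = 0) ∧
    (↑(ls.flatten.map Prod.snd) : Multiset G) ≤ S

/-- The `m`-wise `W`-weighted Davenport constant `D_{W,m}(G)`. -/
noncomputable def DW (W : Set ℤ) (G : Type*) [AddCommGroup G] (m : ℕ) : ℕ :=
  sInf {n : ℕ | ∀ S : Multiset G, n ≤ Multiset.card S → HasDisjointWZeroSubsums W S m}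

/-- The `L`-constrained `W`-weighted Davenport constant `s_{W,L}(G)`, valued in `ℕ∞`. -/
noncomputable def sWL (W : Set ℤ) (G : Type*) [AddCommGroup G] (L : Set ℕ) : ℕ∞ :=
  sInf {N : ℕ∞ | ∃ n : ℕ, N = (n : ℕ∞) ∧
    ∀ S : Multiset G, n ≤ Multiset.card S → HasWZeroSubsumLen W S L}

/-- The `d`-constrained `W`-weighted Davenport constant `s_{W,≤d}(G)`. -/
noncomputable def sWle (W : Set ℤ) (G : Type*) [AddCommGroup G] (d : ℕ) : ℕ∞ :=
  sWL W G {t | 1 ≤ t ∧ t ≤ d}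

/-- `e_W(G)`: the smallest `t ≥ 1` such that some `t` weights from `W` sum to a
multiple of `exp(G)`. -/
noncomputable def eW (W : Set ℤ) (G : Type*) [AddCommGroup G] : ℕ :=
  sInf {t : ℕ | 1 ≤ t ∧ ∃ w : Fin t → ℤ, (∀ i, w i ∈ W) ∧
    ((AddMonoid.exponent G : ℤ) ∣ ∑ i, w i)}

/-- `W` is multiplicatively closed modulo `n`. -/
def MulClosedMod (W : Set ℤ) (n : ℕ) : Prop :=
  ∀ w ∈ W, ∀ w' ∈ W, ∃ u ∈ W, (n : ℤ) ∣ w * w' - u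


open Function

section WeightMatrix

variable {K V ι κ : Type*}

/-- Column `j` holds the weights of the `j`-th of a family of disjoint nonempty subsums;
disjointness of the column supports is phrased as: every row has at most one nonzero entry. -/
def DisjointNonzeroCols [Zero K] (C : Matrix ι κ K) : Prop :=
  (∀ i, (support (C i)).Subsingleton) ∧ ∀ j, ∃ i, C i j ≠ 0

variable [AddCommGroup V] [Fintype ι]

section Semiring

variable [Semiring K] [Module K V]

def weightedSums (C : Matrix ι κ K) : (ι → V) →+ (κ → V) :=
  AddMonoidHom.mk' (fun g j => ∑ i, C i j • g i) fun g h => by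
    funext j
    simp [smul_add, Finset.sum_add_distrib]

theorem weightedSums_apply (C : Matrix ι κ K) (g : ι → V) (j : κ) :
    weightedSums C g j = ∑ i, C i j • g i := rfl

theorem weightedSums_single [DecidableEq ι] (C : Matrix ι κ K) (i : ι) (x : V) (j : κ) :
    weightedSums C (Pi.single i x) j = C i j • x := by
  simp [weightedSums_apply, Pi.single_apply]

end Semiring

theorem weightedSums_surjective [DivisionRing K] [Module K V] [Fintype κ] {C : Matrix ι κ K}
    (hC : DisjointNonzeroCols C) :
    Surjective (weightedSums (V := V) C) := by
  classical
  choose s hs using hC.2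
  intro y
  refine ⟨∑ j, Pi.single (s j) ((C (s j) j)⁻¹ • y j), funext fun j' => ?_⟩
  rw [map_sum, Finset.sum_apply, Finset.sum_eq_single j']
  · rw [weightedSums_single, smul_inv_smul₀ (hs j')]
  · intro j _ hj
    have : C (s j) j' = 0 := by
      by_contra h
      exact hj (hC.1 (s j) (hs j) h)
    rw [weightedSums_single, this, zero_smul]
  · simp

end WeightMatrix

theorem AddMonoidHom.card_ker_mul_card_of_surjective {G H : Type*} [AddGroup G] [AddGroup H]
    (f : G →+ H) (hf : Surjective f) : Nat.card f.ker * Nat.card H = Nat.card G := by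
  rw [← f.ker.card_mul_index, AddSubgroup.index_ker f, f.range_eq_top.mpr hf,
    AddSubgroup.card_top]

theorem card_support_subsingleton_le {K κ : Type*} [DivisionRing K] [Finite K] [Finite κ] :
    Nat.card {v : κ → K // (support v).Subsingleton} ≤ 1 + Nat.card κ * (Nat.card K - 1) := by
  classical
  let single : Option (κ × Kˣ) → {v : κ → K // (support v).Subsingleton}
    | none => ⟨0, by simp⟩
    | some (j, u) => ⟨Pi.single j u, Set.subsingleton_singleton.anti (Pi.support_single_subset)⟩
  have hsingle : Surjective single := by
    rintro ⟨v, hv⟩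
    by_cases h0 : v = 0
    · exact ⟨none, by simp [single, h0]⟩
    obtain ⟨j, hj⟩ := Function.ne_iff.mp h0
    refine ⟨some (j, Units.mk0 (v j) hj), Subtype.ext (funext fun j' => ?_)⟩
    by_cases hj' : j' = j
    · subst hj'; simp [single]
    · have : v j' = 0 := by
        by_contra h
        exact hj' (hv h hj)
      simp [single, hj', this]
  calc _ ≤ Nat.card (Option (κ × Kˣ)) := Nat.card_le_card_of_surjective single hsingle
    _ = 1 + Nat.card κ * (Nat.card K - 1) := by
      rw [Finite.card_option, Nat.card_prod, Nat.card_units, add_comm]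

section Counting

variable {K V ι κ : Type*} [DivisionRing K] [Finite K] [AddCommGroup V] [Module K V] [Finite V]
  [Fintype ι] [Fintype κ]

theorem card_disjointNonzeroCols_le :
    Nat.card {C : Matrix ι κ K // DisjointNonzeroCols C} ≤
      (1 + Nat.card κ * (Nat.card K - 1)) ^ Nat.card ι := by
  calc _ ≤ Nat.card (ι → {v : κ → K // (support v).Subsingleton}) :=
        Nat.card_le_card_of_injective (fun C i => ⟨C.1 i, C.2.1 i⟩) fun C C' h =>
          Subtype.ext (funext fun i => congrArg Subtype.val (congrFun h i))
    _ ≤ _ := by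
      rw [Nat.card_fun]
      exact Nat.pow_le_pow_left card_support_subsingleton_le _

theorem card_le_card_disjointNonzeroCols
    (h : ∀ g : ι → V, ∃ C : Matrix ι κ K, DisjointNonzeroCols C ∧ weightedSums C g = 0) :
    Nat.card (κ → V) ≤ Nat.card {C : Matrix ι κ K // DisjointNonzeroCols C} := by
  classical
  let P := {C : Matrix ι κ K // DisjointNonzeroCols C}
  have := Fintype.ofFinite P
  have hcover : Nat.card (ι → V) ≤ ∑ C : P, Nat.card (weightedSums (V := V) C.1).ker := by
    rw [← Nat.card_sigma]
    refine Nat.card_le_card_of_surjective (fun x => x.2.1) fun g => ?_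
    obtain ⟨C, hC, hg⟩ := h g
    exact ⟨⟨⟨C, hC⟩, g, hg⟩, rfl⟩
  have hker (C : P) : Nat.card (weightedSums (V := V) C.1).ker * Nat.card (κ → V) =
      Nat.card (ι → V) :=
    AddMonoidHom.card_ker_mul_card_of_surjective _ (weightedSums_surjective C.2)
  have hpos : 0 < Nat.card (ι → V) := Nat.card_pos
  refine Nat.le_of_mul_le_mul_left ?_ hpos
  calc Nat.card (ι → V) * Nat.card (κ → V)
      ≤ (∑ C : P, Nat.card (weightedSums (V := V) C.1).ker) * Nat.card (κ → V) :=
        Nat.mul_le_mul_right _ hcover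
    _ = Nat.card (ι → V) * Nat.card P := by
        rw [Finset.sum_mul, Finset.sum_congr rfl fun C _ => hker C, Finset.sum_const,
          Finset.card_univ, ← Nat.card_eq_fintype_card, smul_eq_mul, mul_comm]

theorem card_pow_le_of_forall_exists_disjointNonzeroCols
    (h : ∀ g : ι → V, ∃ C : Matrix ι κ K, DisjointNonzeroCols C ∧ weightedSums C g = 0) :
    Nat.card V ^ Nat.card κ ≤ (1 + Nat.card κ * (Nat.card K - 1)) ^ Nat.card ι := by
  rw [← Nat.card_fun]
  exact (card_le_card_disjointNonzeroCols h).trans card_disjointNonzeroCols_le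

end Counting

section Lift

variable {α β ι : Type*} (g : ι → α)

theorem exists_lift_of_coe_le_map : ∀ (l : List (β × α)) (t : Multiset ι),
    (↑(l.map Prod.snd) : Multiset α) ≤ t.map g →
      ∃ l' : List (β × ι), l'.map (Prod.map id g) = l ∧
        (↑(l'.map Prod.snd) : Multiset ι) ≤ t
  | [], _, _ => ⟨[], rfl, by simp⟩
  | (b, x) :: l, t, h => by
    classical
    obtain ⟨i, hi, rfl⟩ := Multiset.mem_map.mp
      (Multiset.mem_of_le h (by simp : x ∈ (↑(((b, x) :: l).map Prod.snd) : Multiset α)))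
    rw [← Multiset.cons_erase hi, Multiset.map_cons, List.map_cons, ← Multiset.cons_coe,
      Multiset.cons_le_cons_iff] at h
    obtain ⟨l', rfl, hle⟩ := exists_lift_of_coe_le_map l (t.erase i) h
    refine ⟨(b, i) :: l', rfl, ?_⟩
    rw [← Multiset.cons_erase hi, List.map_cons, ← Multiset.cons_coe, Multiset.cons_le_cons_iff]
    exact hle

theorem exists_lift_flatten_of_coe_le_map : ∀ (ls : List (List (β × α))) (t : Multiset ι),
    (↑(ls.flatten.map Prod.snd) : Multiset α) ≤ t.map g →
      ∃ ls' : List (List (β × ι)), ls'.map (List.map (Prod.map id g)) = ls ∧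
        (↑(ls'.flatten.map Prod.snd) : Multiset ι) ≤ t
  | [], _, _ => ⟨[], rfl, by simp⟩
  | l :: ls, t, h => by
    classical
    rw [List.flatten_cons, List.map_append, ← Multiset.coe_add] at h
    obtain ⟨l', rfl, hl'⟩ := exists_lift_of_coe_le_map g l t (le_self_add.trans h)
    set u : Multiset ι := ↑(l'.map Prod.snd)
    have hu : (↑((l'.map (Prod.map id g)).map Prod.snd) : Multiset α) = u.map g := by
      simp [u, Function.comp_def]
    rw [hu, ← tsub_add_cancel_of_le hl', Multiset.map_add, add_comm (Multiset.map g (t - u)),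
      add_le_add_iff_left] at h
    obtain ⟨ls', rfl, hls'⟩ := exists_lift_flatten_of_coe_le_map ls (t - u) h
    refine ⟨l' :: ls', rfl, ?_⟩
    rw [List.flatten_cons, List.map_append, ← Multiset.coe_add]
    exact (le_tsub_iff_left hl').mp hls'

end Lift

theorem List.disjoint_getD_of_nodup_flatten {α : Type*} {L : List (List α)}
    (h : L.flatten.Nodup) {i j : ℕ} (hij : i ≠ j) : (L.getD i []).Disjoint (L.getD j []) := by
  by_cases hi : i < L.length
  · by_cases hj : j < L.length
    · rw [List.getD_eq_getElem _ _ hi, List.getD_eq_getElem _ _ hj]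
      have hpw := List.pairwise_iff_getElem.mp (List.nodup_flatten.mp h).2
      rcases Nat.lt_or_gt_of_ne hij with hlt | hlt
      · exact hpw i j hi hj hlt
      · exact (hpw j i hj hi hlt).symm
    · rw [List.getD_eq_default _ _ (not_lt.mp hj)]
      exact List.disjoint_nil_right _
  · rw [List.getD_eq_default _ _ (not_lt.mp hi)]
    exact List.disjoint_nil_left _

section ListCoeff

variable {ι : Type*} [DecidableEq ι]

def listCoeff (l : List (ℤ × ι)) (i : ι) : ℤ :=
  (l.map fun q => if q.2 = i then q.1 else 0).sum

theorem listCoeff_cons (a : ℤ × ι) (l : List (ℤ × ι)) (i : ι) :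
    listCoeff (a :: l) i = (if a.2 = i then a.1 else 0) + listCoeff l i :=
  List.sum_cons

theorem sum_listCoeff_zsmul [Fintype ι] {V : Type*} [AddCommGroup V] (l : List (ℤ × ι))
    (g : ι → V) : ∑ i, listCoeff l i • g i = (l.map fun q => q.1 • g q.2).sum := by
  induction l with
  | nil => simp [listCoeff]
  | cons q l ih =>
    simp [listCoeff_cons, add_smul, Finset.sum_add_distrib, ite_smul, ih]

theorem listCoeff_eq_zero {l : List (ℤ × ι)} {i : ι} (h : i ∉ l.map Prod.snd) :
    listCoeff l i = 0 := by
  refine List.sum_eq_zero fun x hx => ?_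
  obtain ⟨q, hq, rfl⟩ := List.mem_map.mp hx
  exact if_neg fun hqi => h (List.mem_map.mpr ⟨q, hq, hqi⟩)

theorem listCoeff_eq_of_mem {l : List (ℤ × ι)} (hl : (l.map Prod.snd).Nodup) {q : ℤ × ι}
    (hq : q ∈ l) : listCoeff l q.2 = q.1 := by
  induction l with
  | nil => simp at hq
  | cons a l ih =>
    rw [List.map_cons, List.nodup_cons] at hl
    rcases List.mem_cons.mp hq with rfl | hq
    · rw [listCoeff_cons, if_pos rfl, listCoeff_eq_zero hl.1, add_zero]
    · have hqa : a.2 ≠ q.2 := fun h => hl.1 (h ▸ List.mem_map_of_mem hq)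
      rw [listCoeff_cons, if_neg hqa, zero_add, ih hl.2 hq]

end ListCoeff

section WeightedZeroSubsums

variable {p m : ℕ} {ι V : Type*} [DecidableEq ι]

theorem ZMod.intCast_ne_zero_of_mem_Icc {w : ℤ} (hw : w ∈ Set.Icc 1 ((p : ℤ) - 1)) :
    (w : ZMod p) ≠ 0 := by
  rw [Ne, ZMod.intCast_zmod_eq_zero_iff_dvd]
  intro h
  linarith [hw.2, Int.le_of_dvd (by linarith [hw.1]) h]

theorem disjointNonzeroCols_listCoeff {ls : List (List (ℤ × ι))} (hlen : ls.length = m)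
    (hnd : (ls.flatten.map Prod.snd).Nodup)
    (hW : ∀ l ∈ ls, l ≠ [] ∧ ∀ q ∈ l, q.1 ∈ Set.Icc 1 ((p : ℤ) - 1)) :
    DisjointNonzeroCols
      (Matrix.of fun i (j : Fin m) => (listCoeff (ls.getD j []) i : ZMod p)) := by
  rw [List.map_flatten] at hnd
  have hkeys (j : ℕ) : (ls.map (List.map Prod.snd)).getD j [] = (ls.getD j []).map Prod.snd :=
    List.getD_map ls [] _
  have hmem (j : Fin m) : ls.getD j [] ∈ ls := by
    rw [List.getD_eq_getElem _ _ (hlen ▸ j.2)]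
    exact List.getElem_mem _
  constructor
  · intro i j hj j' hj'
    by_contra hne
    have hkey (j : Fin m) (hj : (listCoeff (ls.getD j []) i : ZMod p) ≠ 0) :
        i ∈ (ls.map (List.map Prod.snd)).getD j [] := by
      by_contra h
      rw [hkeys] at h
      exact hj (by rw [listCoeff_eq_zero h, Int.cast_zero])
    exact List.disjoint_getD_of_nodup_flatten hnd (Fin.val_ne_of_ne hne) (hkey j hj)
      (hkey j' hj')
  · intro j
    obtain ⟨hne, hw⟩ := hW _ (hmem j)
    obtain ⟨q, hq⟩ := List.exists_mem_of_ne_nil _ hne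
    have hndj : ((ls.getD j []).map Prod.snd).Nodup :=
      (List.nodup_flatten.mp hnd).1 _ (List.mem_map_of_mem (hmem j))
    refine ⟨q.2, ?_⟩
    show (listCoeff (ls.getD j []) q.2 : ZMod p) ≠ 0
    rw [listCoeff_eq_of_mem hndj hq]
    exact ZMod.intCast_ne_zero_of_mem_Icc (hw q hq)

theorem exists_disjointNonzeroCols_of_hasDisjointWZeroSubsums [Fintype ι] [AddCommGroup V]
    [Module (ZMod p) V] {g : ι → V}
    (h : HasDisjointWZeroSubsums (Set.Icc 1 ((p : ℤ) - 1)) (Finset.univ.val.map g) m) :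
    ∃ C : Matrix ι (Fin m) (ZMod p), DisjointNonzeroCols C ∧ weightedSums C g = 0 := by
  obtain ⟨ls, hlen, hls, hle⟩ := h
  obtain ⟨ls', rfl, hle'⟩ := exists_lift_flatten_of_coe_le_map g ls _ hle
  have hnd : (ls'.flatten.map Prod.snd).Nodup :=
    Multiset.coe_nodup.mp (Multiset.nodup_of_le hle' Finset.univ.nodup)
  refine ⟨_, disjointNonzeroCols_listCoeff (by simpa using hlen) hnd fun l hl => ?_, ?_⟩
  · obtain ⟨hne, hW, -⟩ := hls _ (List.mem_map_of_mem hl)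
    exact ⟨by simpa using hne, fun q hq => by simpa using hW _ (List.mem_map_of_mem hq)⟩
  · funext j
    set ls := ls'.map (List.map (Prod.map id g))
    have hget : ls.getD j [] = (ls'.getD j []).map (Prod.map id g) := List.getD_map ls' [] _
    have hmem : ls.getD j [] ∈ ls := by
      rw [List.getD_eq_getElem _ _ (hlen ▸ j.2)]
      exact List.getElem_mem _
    rw [weightedSums_apply, Pi.zero_apply]
    simp_rw [Matrix.of_apply, Int.cast_smul_eq_zsmul, sum_listCoeff_zsmul]
    have hsum := (hls _ hmem).2.2
    rw [hget, List.map_map] at hsum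
    exact hsum

end WeightedZeroSubsums

section Finiteness

variable {G : Type*} [AddCommGroup G] {W : Set ℤ}

theorem HasDisjointWZeroSubsums.cons [DecidableEq G] {S : Multiset G} {m : ℕ}
    {l : List (ℤ × G)} (hl : IsWZeroSubsum W S l)
    (h : HasDisjointWZeroSubsums W (S - (l.map Prod.snd : Multiset G)) m) :
    HasDisjointWZeroSubsums W S (m + 1) := by
  obtain ⟨hne, hW, hle, hsum⟩ := hl
  obtain ⟨ls, rfl, hls, hle'⟩ := h
  refine ⟨l :: ls, rfl, ?_, ?_⟩
  · rintro l' (_ | ⟨_, hl'⟩)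
    exacts [⟨hne, hW, hsum⟩, hls l' hl']
  · rw [List.flatten_cons, List.map_append, ← Multiset.coe_add]
    exact (le_tsub_iff_left hle).mp hle'

theorem exists_isWZeroSubsum_pair [Finite G] {a b : ℤ} (ha : a ∈ W) (hb : b ∈ W)
    (hab : ∀ x : G, (a + b) • x = 0) {S : Multiset G} (hS : Nat.card G < Multiset.card S) :
    ∃ x, IsWZeroSubsum W S [(a, x), (b, x)] := by
  classical
  have := Fintype.ofFinite G
  have hdup : ¬S.Nodup := fun hnd => by
    rw [← Multiset.toFinset_card_of_nodup hnd, Nat.card_eq_fintype_card] at hS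
    exact hS.not_ge (Finset.card_le_univ _)
  obtain ⟨x, hx⟩ : ∃ x, 1 < S.count x := by
    simpa [Multiset.nodup_iff_count_le_one] using hdup
  refine ⟨x, by simp, ?_, ?_, ?_⟩
  · simp [ha, hb]
  · exact Multiset.le_count_iff_replicate_le.mp hx
  · simpa [add_smul] using hab x

theorem hasDisjointWZeroSubsums_of_card_lt [Finite G] {a b : ℤ} (ha : a ∈ W) (hb : b ∈ W)
    (hab : ∀ x : G, (a + b) • x = 0) :
    ∀ (m : ℕ) (S : Multiset G), Nat.card G + 2 * m < Multiset.card S →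
      HasDisjointWZeroSubsums W S m
  | 0, _, _ => ⟨[], rfl, by simp, by simp⟩
  | m + 1, S, hS => by
    classical
    obtain ⟨x, hx⟩ := exists_isWZeroSubsum_pair ha hb hab (S := S) (by omega)
    refine HasDisjointWZeroSubsums.cons hx (hasDisjointWZeroSubsums_of_card_lt ha hb hab m _ ?_)
    rw [Multiset.card_sub hx.2.2.1]
    simp only [List.map_cons, List.map_nil, Multiset.coe_card, List.length_cons, List.length_nil]
    omega

theorem hasDisjointWZeroSubsums_of_DW_le {m : ℕ}
    (h : ∃ n, ∀ S : Multiset G, n ≤ Multiset.card S → HasDisjointWZeroSubsums W S m) :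
    ∀ S : Multiset G, DW W G m ≤ Multiset.card S → HasDisjointWZeroSubsums W S m :=
  Nat.sInf_mem h

end Finiteness

theorem pow_le_of_forall_hasDisjointWZeroSubsums {p m n : ℕ} [Fact p.Prime] {V : Type*}
    [AddCommGroup V] [Module (ZMod p) V] [Finite V]
    (h : ∀ g : Fin n → V,
      HasDisjointWZeroSubsums (Set.Icc 1 ((p : ℤ) - 1)) (Finset.univ.val.map g) m) :
    Nat.card V ^ m ≤ (1 + m * (p - 1)) ^ n := by
  simpa using card_pow_le_of_forall_exists_disjointNonzeroCols (K := ZMod p) (κ := Fin m)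
    fun g => exists_disjointNonzeroCols_of_hasDisjointWZeroSubsums (h g)

theorem log_mul_div_log_mul_le_of_pow_le {p m r d : ℕ} (hp : 1 ≤ p)
    (h : p ^ (r * m) ≤ (1 + m * (p - 1)) ^ d) :
    Real.log p * m / Real.log (1 + (m : ℝ) * ((p : ℝ) - 1)) * r ≤ d := by
  have hq : ((1 + m * (p - 1) : ℕ) : ℝ) = 1 + (m : ℝ) * ((p : ℝ) - 1) := by
    push_cast [Nat.cast_sub hp]
    ring
  have hlog := Real.log_le_log (by exact_mod_cast pow_pos hp _) (by exact_mod_cast h :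
    ((p ^ (r * m) : ℕ) : ℝ) ≤ ((1 + m * (p - 1)) ^ d : ℕ))
  rw [Nat.cast_pow, Nat.cast_pow, Real.log_pow, Real.log_pow, hq] at hlog
  rw [div_mul_eq_mul_div]
  refine div_le_of_le_mul₀ (Real.log_nonneg ?_) d.cast_nonneg ?_
  · rw [← hq]
    exact_mod_cast Nat.le_add_right 1 _
  · push_cast at hlog
    linarith

theorem stmt19_general (m : ℕ) (p : ℕ) (hp : p.Prime) :
    ∃ R : ℕ, ∀ r : ℕ, R ≤ r →
      Real.log p * m / Real.log (1 + (m : ℝ) * ((p : ℝ) - 1)) * r ≤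
        (DW (Set.Icc 1 ((p : ℤ) - 1)) (Fin r → ZMod p) m : ℝ) := by
  have := Fact.mk hp
  refine ⟨0, fun r _ => log_mul_div_log_mul_le_of_pow_le hp.one_lt.le ?_⟩
  have hpW : (p : ℤ) - 1 ∈ Set.Icc 1 ((p : ℤ) - 1) :=
    Set.mem_Icc.mpr ⟨by linarith [hp.two_le], le_rfl⟩
  have hfin := hasDisjointWZeroSubsums_of_card_lt (G := Fin r → ZMod p)
    (Set.mem_Icc.mpr ⟨le_rfl, hpW.1⟩) hpW
    (fun x => by rw [add_sub_cancel, natCast_zsmul, ZModModule.char_nsmul_eq_zero]) m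
  have hDW := hasDisjointWZeroSubsums_of_DW_le ⟨_, hfin⟩
  have hpow := pow_le_of_forall_hasDisjointWZeroSubsums
    (n := DW (Set.Icc 1 ((p : ℤ) - 1)) (Fin r → ZMod p) m) fun g => hDW _ (by simp)
  rwa [Nat.card_fun, Nat.card_zmod, Nat.card_fin, ← pow_mul] at hpow

/-- for fixed `m` and prime `p`, for all sufficiently large `r`,
`D_{A,m}(C_p^r) ≥ (log p) · m / log(1 + m(p-1)) · r`. -/
theorem stmt19 (m : ℕ) (hm : 1 ≤ m) (p : ℕ) (hp : p.Prime) :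
    ∃ R : ℕ, ∀ r : ℕ, R ≤ r →
      Real.log p * m / Real.log (1 + (m : ℝ) * ((p : ℝ) - 1)) * r ≤
        (DW (Set.Icc 1 ((p : ℤ) - 1)) (Fin r → ZMod p) m : ℝ) :=
  stmt19_general m p hp
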